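/- Let O be a finite order ideal in the terms of n variables, and fix an enumeration β_1,…,β_m of ∂O with nondecreasing degrees; for each i put M_{β_i} = {η a term : β_j does not divide η·β_i for every j > i}. If x_ℓ·β_i = δ·β_j for some variable x_ℓ ∉ M_{β_i} and some term δ ∈ M_{β_j} (i.e., (β_i,β_j) is a non-multiplicative couple), then j > i and deg(δ) ≤ 1. -/

import Mathlib

open MvPolynomial

/-- A term in `n` variables, viewed as its exponent vector in `ℕ^n`. -/
abbrev Term (n : ℕ) := Fin n →₀ ℕ

/-- The total degree of a term. -/
def termDeg {n : ℕ} (τ : Term n) : ℕ := τ.sum fun _ e => e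

/-- `O` is an order ideal: every divisor (componentwise `≤`) of a term of `O` lies in `O`. -/
def IsOrderIdeal {n : ℕ} (O : Set (Term n)) : Prop :=
  ∀ σ τ : Term n, τ ∈ O → σ ≤ τ → σ ∈ O

/-- The border `∂O` of an order ideal `O`. -/
def border {n : ℕ} (O : Set (Term n)) : Set (Term n) :=
  {μ | μ ∉ O ∧ ∃ τ ∈ O, ∃ i : Fin n, μ = τ + Finsupp.single i 1}

/-- The Pommaret basis `P_O = {σ ∉ O : σ / min σ ∈ O}` of the monomial ideal generated by the
terms outside `O`; here `i` is the minimal variable of `σ`. -/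
def pommaret {n : ℕ} (O : Set (Term n)) : Set (Term n) :=
  {σ | σ ∉ O ∧ ∃ i : Fin n, σ i ≠ 0 ∧ (∀ j : Fin n, j < i → σ j = 0) ∧
    σ - Finsupp.single i 1 ∈ O}

/-- `F` is an `H`-marked set (with tails in `O`): for every `α ∈ H`,
`F α = α - Σ_{σ ∈ O} c_σ σ`, i.e. the coefficient of `α` is `1` and all other
terms in the support of `F α` lie in `O`. -/
def IsMarkedSet {n : ℕ} (A : Type*) [CommRing A] (O H : Set (Term n))
    (F : Term n → MvPolynomial (Fin n) A) : Prop :=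
  ∀ α ∈ H, (F α).coeff α = 1 ∧ ∀ γ ∈ (F α).support, γ ≠ α → γ ∈ O

/-- The `A`-submodule `⟨O⟩_A` of `R_A` spanned by the monomials with exponent in `O`. -/
noncomputable def OSpan {n : ℕ} (A : Type*) [CommRing A] (O : Set (Term n)) :
    Submodule A (MvPolynomial (Fin n) A) :=
  Submodule.span A ((fun σ : Term n => (monomial σ (1 : A) : MvPolynomial (Fin n) A)) '' O)

/-- `R_A = (S) ⊕ ⟨O⟩_A` as an internal direct sum of `A`-modules. -/
def IsBasisDecomp {n : ℕ} (A : Type*) [CommRing A] (O : Set (Term n))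
    (S : Set (MvPolynomial (Fin n) A)) : Prop :=
  (Submodule.restrictScalars A (Ideal.span S) ⊓ OSpan A O = ⊥) ∧
  (Submodule.restrictScalars A (Ideal.span S) ⊔ OSpan A O = ⊤)

/-- `F` is an `H`-marked basis. -/
def IsMarkedBasis {n : ℕ} (A : Type*) [CommRing A] (O H : Set (Term n))
    (F : Term n → MvPolynomial (Fin n) A) : Prop :=
  IsMarkedSet A O H F ∧ IsBasisDecomp A O (F '' H)

/-- The iterated borders: `∂^0 O = O` and `∂^{k+1} O = ∂(∂^0 O ∪ ⋯ ∪ ∂^k O)`. -/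
def borderIter {n : ℕ} (O : Set (Term n)) : ℕ → Set (Term n)
  | 0 => O
  | k + 1 => border (⋃ j : Fin (k + 1), borderIter O j.1)
decreasing_by exact j.2

/-- The index `ind_O(μ)`: the least `k` with `μ ∈ ∂^k O`. -/
noncomputable def indO {n : ℕ} (O : Set (Term n)) (μ : Term n) : ℕ :=
  sInf {k | μ ∈ borderIter O k}

/-- The multiplicative set of `β i` for the degree-ordered border reduction structure:
`M_{β_i} = {η : β_j ∤ η β_i for every j > i}`. -/
def multSet {n m : ℕ} (β : Fin m → Term n) (i : Fin m) : Set (Term n) :=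
  {η | ∀ j : Fin m, i < j → ¬ β j ≤ η + β i}

/-- The cone of `β i` by its multiplicative set. -/
def cone {n m : ℕ} (β : Fin m → Term n) (i : Fin m) : Set (Term n) :=
  {γ | ∃ η ∈ multSet β i, γ = η + β i}

/-- One step of border reduction: some `γ = η β_i ∈ supp g` with `η ∈ M_{β_i}` is replaced
using the marked polynomial `B i`. -/
def BStep {n m : ℕ} {A : Type*} [CommRing A] (β : Fin m → Term n)
    (B : Fin m → MvPolynomial (Fin n) A) (g h : MvPolynomial (Fin n) A) : Prop :=
  ∃ (i : Fin m) (η : Term n), η ∈ multSet β i ∧ η + β i ∈ g.support ∧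
    h = g - monomial η (g.coeff (η + β i)) * B i

/-- The S-polynomial of two marked polynomials with head terms `α`, `α'`. -/
noncomputable def Spoly {n : ℕ} {A : Type*} [CommRing A] (α α' : Term n)
    (f f' : MvPolynomial (Fin n) A) : MvPolynomial (Fin n) A :=
  monomial (α ⊔ α' - α) 1 * f - monomial (α ⊔ α' - α') 1 * f'

/-- `(α, α')` is a neighbour couple of distinct terms. -/
def Neighbour {n : ℕ} (α α' : Term n) : Prop :=
  α ≠ α' ∧ ((∃ j : Fin n, α = α' + Finsupp.single j 1) ∨
    (∃ i j : Fin n, α + Finsupp.single i 1 = α' + Finsupp.single j 1))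

/-- `(β i, β j)` is a non-multiplicative couple for the border reduction structure. -/
def NonMultB {n m : ℕ} (β : Fin m → Term n) (i j : Fin m) : Prop :=
  ∃ (ℓ : Fin n) (δ : Term n), Finsupp.single ℓ 1 ∉ multSet β i ∧ δ ∈ multSet β j ∧
    Finsupp.single ℓ 1 + β i = δ + β j

/-- The Pommaret multiplicative set of a term `α`: terms in the variables `x_1, …, min α`. -/
def pommMult {n : ℕ} (α : Term n) : Set (Term n) :=
  {η | ∀ j : Fin n, η j ≠ 0 → ∀ k : Fin n, k < j → α k = 0}

/-- One step of Pommaret reduction. -/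
def PStep {n : ℕ} {A : Type*} [CommRing A] (O : Set (Term n))
    (P : Term n → MvPolynomial (Fin n) A) (g h : MvPolynomial (Fin n) A) : Prop :=
  ∃ α ∈ pommaret O, ∃ η ∈ pommMult α, η + α ∈ g.support ∧
    h = g - monomial η (g.coeff (η + α)) * P α

/-- `(α, α')` is a non-multiplicative couple for the Pommaret reduction structure. -/
def NonMultP {n : ℕ} (α α' : Term n) : Prop :=
  ∃ ℓ : Fin n, Finsupp.single ℓ 1 ∉ pommMult α ∧
    ∃ δ ∈ pommMult α', Finsupp.single ℓ 1 + α = δ + α'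

theorem termDeg_eq_degree {n : ℕ} (τ : Term n) : termDeg τ = τ.degree := rfl

theorem termDeg_add {n : ℕ} (σ τ : Term n) : termDeg (σ + τ) = termDeg σ + termDeg τ := by
  simp only [termDeg_eq_degree, map_add]

theorem termDeg_single {n : ℕ} (ℓ : Fin n) : termDeg (Finsupp.single ℓ 1) = 1 := by
  rw [termDeg_eq_degree, Finsupp.degree_single]

theorem exists_lt_le_of_notMem_multSet {n m : ℕ} {β : Fin m → Term n} {i : Fin m}
    {η : Term n} (h : η ∉ multSet β i) : ∃ k, i < k ∧ β k ≤ η + β i := by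
  simpa [multSet] using h

/-- The same divisor `β_k` (`k > i`) of `x_ℓ β_i = δ β_j` that puts `x_ℓ` outside `M_{β_i}`
would put `δ` outside `M_{β_j}` if `j ≤ i`. -/
theorem lt_of_notMem_multSet_of_mem_multSet {n m : ℕ} {β : Fin m → Term n} {i j : Fin m}
    {η δ : Term n} (hη : η ∉ multSet β i) (hδ : δ ∈ multSet β j)
    (heq : η + β i = δ + β j) : i < j := by
  obtain ⟨k, hik, hk⟩ := exists_lt_le_of_notMem_multSet hη
  by_contra! hji
  exact hδ k (hji.trans_lt hik) (heq ▸ hk)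

theorem termDeg_le_one_of_single_add_eq_add {n : ℕ} {α α' δ : Term n} {ℓ : Fin n}
    (hdeg : termDeg α ≤ termDeg α') (heq : Finsupp.single ℓ 1 + α = δ + α') :
    termDeg δ ≤ 1 := by
  have hsum : 1 + termDeg α = termDeg δ + termDeg α' := by
    rw [← termDeg_single ℓ, ← termDeg_add, ← termDeg_add, heq]
  omega

theorem nonmult_couple_border_general {n : ℕ}
    {m : ℕ} (β : Fin m → Term n)
    (hβdeg : Monotone fun i => termDeg (β i))
    (i j : Fin m) (ℓ : Fin n) (δ : Term n)
    (hℓ : Finsupp.single ℓ 1 ∉ multSet β i) (hδ : δ ∈ multSet β j)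
    (heq : Finsupp.single ℓ 1 + β i = δ + β j) :
    i < j ∧ termDeg δ ≤ 1 := by
  have hij : i < j := lt_of_notMem_multSet_of_mem_multSet hℓ hδ heq
  exact ⟨hij, termDeg_le_one_of_single_add_eq_add (hβdeg hij.le) heq⟩

/-- Lemma `lem:nonmultBorder`: if `(β_i, β_j)` is a non-multiplicative
couple of the degree-ordered border reduction structure, witnessed by
`x_ℓ β_i = δ β_j` with `x_ℓ ∉ M_(β_i)` and `δ ∈ M_(β_j)`, then `j > i` and `deg δ ≤ 1`. -/
theorem nonmult_couple_border {n : ℕ}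
    (O : Set (Term n)) (hO : IsOrderIdeal O) (hOfin : O.Finite)
    {m : ℕ} (β : Fin m → Term n) (hβinj : Function.Injective β)
    (hβrange : Set.range β = border O)
    (hβdeg : Monotone fun i => termDeg (β i))
    (i j : Fin m) (ℓ : Fin n) (δ : Term n)
    (hℓ : Finsupp.single ℓ 1 ∉ multSet β i) (hδ : δ ∈ multSet β j)
    (heq : Finsupp.single ℓ 1 + β i = δ + β j) :
    i < j ∧ termDeg δ ≤ 1 :=
  nonmult_couple_border_general β hβdeg i j ℓ δ hℓ hδ heq
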